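/- arXiv:math/0605543 — 3 statements merged into one kernel-verified Lean document; each statement's English description precedes it below -/
import Mathlib

section
/- Let c₀ > 0, M > 0, and define A by M - A = (1/c₀²)(1 - e^{-c₀²M}). Set s₁ = -c₀ M and s₀ determined by continuity, and define φ : ℝ → ℝ by φ(s) = M(1 - e^{c₀(s - s₀)}) for s ≤ s₁, φ(s) = (1/c₀²)(e^{c₀ s} - 1 - c₀ s) for s₁ ≤ s ≤ 0, and φ(s) = 0 for s ≥ 0, where s₀ is chosen so that φ is continuous at s₁. Then A ∈ (0, M), φ is C¹ on ℝ, φ' ≤ 0, φ(-∞) = M, φ(+∞) = 0, and φ satisfies c₀ φ'(s) = φ''(s) - g(φ(s)) for all s ∉ {s₁, 0}, where g = χ_{(0,A]} is the characteristic function of the interval (0, A]. -/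
/-!
On each of the three intervals the branch of φ solves the equation explicitly: `φ'' = c₀ φ'` on
the left, `φ'' = c₀ φ' + 1` in the middle, and trivially on the right. At `0` the middle branch
and its slope vanish. At `s₁` the choice of `s₀` matches the values, both equal to `A`, and then
the velocity relation makes both slopes equal to `-c₀ (M - A)`, so φ is `C¹`. Both branches
decrease, so on `(s₁, 0)` φ lies in `(0, A]` while left of `s₁` it exceeds `A`; hence `g ∘ φ` is
`0`, `1`, `0` on the three intervals, which is exactly what the equation requires there.
-/

open Real Set Filter Topology

section Gluing

variable {f g f' g' : ℝ → ℝ} {a x : ℝ}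

lemma ite_le_eventuallyEq_left (hx : x < a) :
    (fun y => if y ≤ a then f y else g y) =ᶠ[𝓝 x] f := by
  filter_upwards [Iio_mem_nhds hx] with y hy
  exact if_pos hy.le

lemma ite_le_eventuallyEq_right (hx : a < x) :
    (fun y => if y ≤ a then f y else g y) =ᶠ[𝓝 x] g := by
  filter_upwards [Ioi_mem_nhds hx] with y hy
  exact if_neg hy.not_ge

lemma deriv_ite_le_of_ne (hx : x ≠ a) :
    deriv (fun y => if y ≤ a then f y else g y) x = if x ≤ a then deriv f x else deriv g x := by
  rcases hx.lt_or_gt with hx | hx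
  · rw [(ite_le_eventuallyEq_left hx).deriv_eq, if_pos hx.le]
  · rw [(ite_le_eventuallyEq_right hx).deriv_eq, if_neg hx.not_ge]

lemma hasDerivAt_ite_le (hf : ∀ x, HasDerivAt f (f' x) x) (hg : ∀ x, HasDerivAt g (g' x) x)
    (hfg : f a = g a) (hfg' : f' a = g' a) (x : ℝ) :
    HasDerivAt (fun y => if y ≤ a then f y else g y) (if x ≤ a then f' x else g' x) x := by
  rcases lt_trichotomy x a with hx | rfl | hx
  · rw [if_pos hx.le]
    exact (hf x).congr_of_eventuallyEq (ite_le_eventuallyEq_left hx)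
  · have hl : HasDerivWithinAt (fun y => if y ≤ x then f y else g y) (f' x) (Iic x) x :=
      (hf x).hasDerivWithinAt.congr (fun y hy => if_pos hy) (if_pos le_rfl)
    have hr : HasDerivWithinAt (fun y => if y ≤ x then f y else g y) (f' x) (Ici x) x := by
      refine hfg' ▸ (hg x).hasDerivWithinAt.congr (fun y hy => ?_) (by simp [hfg])
      rcases (mem_Ici.mp hy).eq_or_lt with rfl | hy
      · simp [hfg]
      · exact if_neg hy.not_ge
    rw [if_pos le_rfl, ← hasDerivWithinAt_univ, ← Iic_union_Ici]
    exact hl.union hr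
  · rw [if_neg hx.not_ge]
    exact (hg x).congr_of_eventuallyEq (ite_le_eventuallyEq_right hx)

end Gluing

lemma exp_sub_one_sub_le_of_le {x y : ℝ} (hxy : x ≤ y) (hy : y ≤ 0) :
    exp y - 1 - y ≤ exp x - 1 - x := by
  have h₁ := add_one_le_exp (x - y)
  have h₂ : exp y ≤ 1 := exp_le_one_iff.mpr hy
  have h₃ : exp x = exp (x - y) * exp y := by rw [← exp_add, sub_add_cancel]
  nlinarith [exp_pos y]

section Branches

variable {c : ℝ} (M s₀ s : ℝ)

lemma hasDerivAt_mul_one_sub_exp :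
    HasDerivAt (fun s => M * (1 - exp (c * (s - s₀)))) (-(M * c * exp (c * (s - s₀)))) s := by
  have h := ((((hasDerivAt_id' s).sub_const s₀).const_mul c).exp.const_sub 1).const_mul M
  exact h.congr_deriv (by ring)

lemma hasDerivAt_neg_mul_exp :
    HasDerivAt (fun s => -(M * c * exp (c * (s - s₀)))) (c * -(M * c * exp (c * (s - s₀)))) s := by
  have h := ((((hasDerivAt_id' s).sub_const s₀).const_mul c).exp.const_mul (M * c)).neg
  exact h.congr_deriv (by ring)

variable {M s₀ s}

lemma lt_mul_one_sub_exp_of_lt {A s₁ : ℝ} (hc : 0 < c) (hM : 0 < M)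
    (hs₁ : M * exp (c * (s₁ - s₀)) = M - A) (hs : s < s₁) : A < M * (1 - exp (c * (s - s₀))) := by
  have := exp_lt_exp.mpr (mul_lt_mul_of_pos_left (sub_lt_sub_right hs s₀) hc)
  nlinarith

variable (s)

lemma hasDerivAt_exp_sub_one_sub (hc : c ≠ 0) :
    HasDerivAt (fun s => 1 / c ^ 2 * (exp (c * s) - 1 - c * s)) (1 / c * (exp (c * s) - 1)) s := by
  have hcs := (hasDerivAt_id' s).const_mul c
  have h := ((hcs.exp.sub_const 1).sub hcs).const_mul (1 / c ^ 2)
  exact h.congr_deriv (by field_simp)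

lemma hasDerivAt_exp_sub_one (hc : c ≠ 0) :
    HasDerivAt (fun s => 1 / c * (exp (c * s) - 1)) (c * (1 / c * (exp (c * s) - 1)) + 1) s := by
  have h := (((hasDerivAt_id' s).const_mul c).exp.sub_const 1).const_mul (1 / c)
  exact h.congr_deriv (by field_simp; ring)

variable {s}

lemma one_div_mul_exp_sub_one_nonpos (hc : 0 ≤ c) (hs : s ≤ 0) : 1 / c * (exp (c * s) - 1) ≤ 0 :=
  mul_nonpos_of_nonneg_of_nonpos (by positivity)
    (by linarith [exp_le_one_iff.mpr (mul_nonpos_of_nonneg_of_nonpos hc hs)])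

lemma one_div_sq_mul_exp_sub_one_sub_pos (hc : c ≠ 0) (hs : s ≠ 0) :
    0 < 1 / c ^ 2 * (exp (c * s) - 1 - c * s) := by
  have := add_one_lt_exp (mul_ne_zero hc hs)
  exact mul_pos (by positivity) (by linarith)

lemma one_div_sq_mul_exp_sub_one_sub_le {s₁ : ℝ} (hc : 0 < c) (h : s₁ ≤ s) (hs : s ≤ 0) :
    1 / c ^ 2 * (exp (c * s) - 1 - c * s) ≤ 1 / c ^ 2 * (exp (c * s₁) - 1 - c * s₁) :=
  mul_le_mul_of_nonneg_left (exp_sub_one_sub_le_of_le (mul_le_mul_of_nonneg_left h hc.le)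
    (mul_nonpos_of_nonneg_of_nonpos hc.le hs)) (by positivity)

end Branches

section Matching

variable {c M A s₀ s₁ : ℝ}

lemma mem_Ioo_of_sub_eq_one_sub_exp (hc : 0 < c) (hM : 0 < M)
    (hA : M - A = 1 / c ^ 2 * (1 - exp (-(c ^ 2) * M))) : A ∈ Ioo 0 M := by
  have hcM : 0 < c ^ 2 * M := by positivity
  have key : c ^ 2 * (M - A) = 1 - exp (-(c ^ 2) * M) := by rw [hA]; field_simp
  have hlo : exp (-(c ^ 2) * M) < 1 := exp_lt_one_iff.mpr (by linarith)
  have hhi := add_one_lt_exp (x := -(c ^ 2) * M) (by linarith)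
  constructor <;> nlinarith

lemma one_div_sq_mul_exp_sub_one_sub_eq (hc : c ≠ 0)
    (hA : M - A = 1 / c ^ 2 * (1 - exp (-(c ^ 2) * M))) (hs₁ : s₁ = -c * M) : 1 / c ^ 2 * (exp (c * s₁) - 1 - c * s₁) = A := by
  rw [hs₁, neg_mul, mul_neg, ← mul_assoc, ← sq, ← neg_mul]
  field_simp at hA ⊢
  linarith

lemma neg_mul_exp_eq_one_div_mul_exp_sub_one (hc : c ≠ 0)
    (hA : M - A = 1 / c ^ 2 * (1 - exp (-(c ^ 2) * M))) (hs₁ : s₁ = -c * M)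
    (hs₀ : M * exp (c * (s₁ - s₀)) = M - A) :
    -(M * c * exp (c * (s₁ - s₀))) = 1 / c * (exp (c * s₁) - 1) := by
  rw [mul_right_comm, hs₀, hs₁, neg_mul, mul_neg, ← mul_assoc, ← sq, ← neg_mul]
  field_simp at hA ⊢
  linarith

end Matching

noncomputable def travelingWave (c M s₀ s₁ s : ℝ) : ℝ :=
  if s ≤ s₁ then M * (1 - exp (c * (s - s₀)))
  else if s ≤ 0 then 1 / c ^ 2 * (exp (c * s) - 1 - c * s) else 0

noncomputable def travelingWaveDeriv (c M s₀ s₁ s : ℝ) : ℝ :=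
  if s ≤ s₁ then -(M * c * exp (c * (s - s₀)))
  else if s ≤ 0 then 1 / c * (exp (c * s) - 1) else 0

section TravelingWave

variable {c M A s₀ s₁ : ℝ}

lemma hasDerivAt_travelingWave (hc : c ≠ 0) (hs₁ : s₁ ≤ 0)
    (hval : M * (1 - exp (c * (s₁ - s₀))) = 1 / c ^ 2 * (exp (c * s₁) - 1 - c * s₁))
    (hslope : -(M * c * exp (c * (s₁ - s₀))) = 1 / c * (exp (c * s₁) - 1)) (s : ℝ) :
    HasDerivAt (travelingWave c M s₀ s₁) (travelingWaveDeriv c M s₀ s₁ s) s :=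
  hasDerivAt_ite_le (hasDerivAt_mul_one_sub_exp M s₀)
    (hasDerivAt_ite_le (hasDerivAt_exp_sub_one_sub · hc) (fun s => hasDerivAt_const s 0)
      (by simp) (by simp))
    (by rwa [if_pos hs₁]) (by rwa [if_pos hs₁]) s

lemma continuous_travelingWaveDeriv (hs₁ : s₁ ≤ 0)
    (hslope : -(M * c * exp (c * (s₁ - s₀))) = 1 / c * (exp (c * s₁) - 1)) :
    Continuous (travelingWaveDeriv c M s₀ s₁) := by
  refine Continuous.if_le (by fun_prop) ?_ continuous_id continuous_const ?_
  · exact Continuous.if_le (by fun_prop) continuous_const continuous_id continuous_const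
      (by rintro x rfl; simp)
  · rintro x rfl
    rwa [if_pos hs₁]

lemma travelingWaveDeriv_nonpos (hc : 0 ≤ c) (hM : 0 ≤ M) (s : ℝ) :
    travelingWaveDeriv c M s₀ s₁ s ≤ 0 := by
  unfold travelingWaveDeriv
  split_ifs with hl hm
  · have : 0 ≤ M * c * exp (c * (s - s₀)) := by positivity
    linarith
  · exact one_div_mul_exp_sub_one_nonpos hc hm
  · exact le_rfl

lemma tendsto_travelingWave_atBot (hc : 0 < c) :
    Tendsto (travelingWave c M s₀ s₁) atBot (𝓝 M) := by
  have h : Tendsto (fun s => c * (s - s₀)) atBot atBot :=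
    (tendsto_atBot_add_const_right atBot (-s₀) tendsto_id).const_mul_atBot hc
  have hleft := ((tendsto_exp_atBot.comp h).const_sub 1).const_mul M
  rw [sub_zero, mul_one] at hleft
  refine hleft.congr' ?_
  filter_upwards [eventually_le_atBot s₁] with s hs
  simp [travelingWave, hs]

lemma tendsto_travelingWave_atTop : Tendsto (travelingWave c M s₀ s₁) atTop (𝓝 0) := by
  refine tendsto_const_nhds.congr' ?_
  filter_upwards [eventually_gt_atTop (max s₁ 0)] with s hs
  rw [max_lt_iff] at hs
  simp [travelingWave, hs.1.not_ge, hs.2.not_ge]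

lemma travelingWave_equation (hc : 0 < c) (hM : 0 < M)
    (hleft : M * exp (c * (s₁ - s₀)) = M - A)
    (hmid : 1 / c ^ 2 * (exp (c * s₁) - 1 - c * s₁) = A) {s : ℝ} (hs₁ : s ≠ s₁) (hs₀ : s ≠ 0) :
    c * travelingWaveDeriv c M s₀ s₁ s = deriv (travelingWaveDeriv c M s₀ s₁) s -
      if travelingWave c M s₀ s₁ s ∈ Ioc 0 A then 1 else 0 := by
  unfold travelingWaveDeriv travelingWave
  rw [deriv_ite_le_of_ne hs₁, deriv_ite_le_of_ne hs₀]
  rcases hs₁.lt_or_gt with hl | hr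
  · simp only [if_pos hl.le, (hasDerivAt_neg_mul_exp M s₀ s).deriv,
      if_neg fun h : _ ∈ Ioc 0 A => h.2.not_gt (lt_mul_one_sub_exp_of_lt hc hM hleft hl)]
    ring
  rcases hs₀.lt_or_gt with hm | hr₀
  · have hmem : 1 / c ^ 2 * (exp (c * s) - 1 - c * s) ∈ Ioc 0 A :=
      ⟨one_div_sq_mul_exp_sub_one_sub_pos hc.ne' hm.ne,
        hmid ▸ one_div_sq_mul_exp_sub_one_sub_le hc hr.le hm.le⟩
    simp only [if_neg hr.not_ge, if_pos hm.le, (hasDerivAt_exp_sub_one s hc.ne').deriv, if_pos hmem]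
    ring
  · simp [hr.not_ge, hr₀.not_ge]

end TravelingWave

theorem stmt0 (c₀ M A s₀ s₁ : ℝ) (hc : 0 < c₀) (hM : 0 < M)
    (hA : M - A = (1 / c₀ ^ 2) * (1 - Real.exp (-(c₀ ^ 2) * M)))
    (hs₁ : s₁ = -c₀ * M)
    (hs₀ : M * (1 - Real.exp (c₀ * (s₁ - s₀))) =
      (1 / c₀ ^ 2) * (Real.exp (c₀ * s₁) - 1 - c₀ * s₁))
    (φ : ℝ → ℝ)
    (hφ : ∀ s, φ s = if s ≤ s₁ then M * (1 - Real.exp (c₀ * (s - s₀)))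
      else if s ≤ 0 then (1 / c₀ ^ 2) * (Real.exp (c₀ * s) - 1 - c₀ * s) else 0)
    (g : ℝ → ℝ) (hg : ∀ z, g z = if z ∈ Set.Ioc (0 : ℝ) A then 1 else 0) :
    A ∈ Set.Ioo 0 M ∧ ContDiff ℝ 1 φ ∧ (∀ s, deriv φ s ≤ 0) ∧
      Filter.Tendsto φ Filter.atBot (nhds M) ∧
      Filter.Tendsto φ Filter.atTop (nhds 0) ∧
      ∀ s, s ≠ s₁ → s ≠ 0 → c₀ * deriv φ s = deriv (deriv φ) s - g (φ s) := by
  obtain rfl : φ = travelingWave c₀ M s₀ s₁ := funext hφ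
  obtain rfl : g = fun z => if z ∈ Ioc 0 A then 1 else 0 := funext hg
  have hs₁_nonpos : s₁ ≤ 0 := by rw [hs₁]; nlinarith
  have hmid := one_div_sq_mul_exp_sub_one_sub_eq hc.ne' hA hs₁
  have hleft : M * exp (c₀ * (s₁ - s₀)) = M - A := by linarith
  have hslope := neg_mul_exp_eq_one_div_mul_exp_sub_one hc.ne' hA hs₁ hleft
  have hderiv := hasDerivAt_travelingWave hc.ne' hs₁_nonpos hs₀ hslope
  have hderiv_eq : deriv (travelingWave c₀ M s₀ s₁) = travelingWaveDeriv c₀ M s₀ s₁ :=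
    funext fun s => (hderiv s).deriv
  refine ⟨mem_Ioo_of_sub_eq_one_sub_exp hc hM hA, ?_, ?_, tendsto_travelingWave_atBot hc,
    tendsto_travelingWave_atTop, fun s hs₁' hs₀' => ?_⟩
  · exact contDiff_one_iff_deriv.mpr ⟨fun s => (hderiv s).differentiableAt,
      hderiv_eq ▸ continuous_travelingWaveDeriv hs₁_nonpos hslope⟩
  · exact fun s => hderiv_eq ▸ travelingWaveDeriv_nonpos hc.le hM.le s
  · rw [hderiv_eq]
    exact travelingWave_equation hc hM hleft hmid hs₁' hs₀'
end

section
/- Let c > 0 and let λ ∈ ℂ with Re(λ) ≥ 0 and λ ≠ 0. Define μ₋ = -c/2 - √(c²/4 + λ), where the square root is chosen with Re(√(c²/4+λ)) > c/2. Then the function W(y) = -(c/λ)(e^{-cy} - e^{μ₋ y}) is the unique bounded solution on [0,∞) of W'' + cW' - λW = c e^{-cy} with W(0) = 0, and the eigenvalue equation 1 = (c/λ)(-c - μ₋) has no solution with Re(λ) ≥ 0, λ ≠ 0. -/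
/-!
The characteristic roots `μ₋ = -c/2 - r` and `μ₊ = -c/2 + r` of `W'' + cW' - λW = 0` satisfy
`Re μ₋ < 0 < Re μ₊`, so `W`, a combination of `e^{-cy}` and `e^{μ₋ y}`, is bounded. The difference
`D` of two bounded solutions vanishing at `0` solves `(∂ - μ₋)(∂ - μ₊) D = 0`; integrating twice
gives `D(y) e^{-μ₊ y} = k (e^{(μ₋ - μ₊) y} - 1)`, and the left side tends to `0`, forcing `k = 0`.
Finally `1 = (c/λ)(-c - μ₋)` means `λ = c (r - c/2)`, hence `(r - c/2)² = 0`, against `Re r > c/2`.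
-/

open Complex Filter Topology

theorem hasDerivAt_cexp_mul_ofReal (a : ℂ) (y : ℝ) :
    HasDerivAt (fun t : ℝ => cexp (a * t)) (a * cexp (a * y)) y := by
  simpa [mul_comm] using ((hasDerivAt_id y).ofReal_comp.const_mul a).cexp

theorem norm_cexp_mul_ofReal (a : ℂ) (y : ℝ) : ‖cexp (a * y)‖ = Real.exp (a.re * y) := by
  simp [Complex.norm_exp]

theorem norm_cexp_mul_ofReal_le_one {a : ℂ} (ha : a.re ≤ 0) {y : ℝ} (hy : 0 ≤ y) :
    ‖cexp (a * y)‖ ≤ 1 := by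
  rw [norm_cexp_mul_ofReal, Real.exp_le_one_iff]
  exact mul_nonpos_of_nonpos_of_nonneg ha hy

theorem tendsto_cexp_mul_ofReal_atTop {a : ℂ} (ha : a.re < 0) :
    Tendsto (fun t : ℝ => cexp (a * t)) atTop (𝓝 0) := by
  rw [tendsto_zero_iff_norm_tendsto_zero]
  simp only [norm_cexp_mul_ofReal]
  exact Real.tendsto_exp_atBot.comp (tendsto_id.const_mul_atTop_of_neg ha)

theorem cexp_mul_ofReal_mul_cexp_mul_ofReal (a b : ℂ) (y : ℝ) :
    cexp (a * y) * cexp (b * y) = cexp ((a + b) * y) := by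
  rw [← Complex.exp_add, add_mul]

noncomputable def expPair (p q α β : ℂ) (t : ℝ) : ℂ := p * cexp (α * t) + q * cexp (β * t)

theorem hasDerivAt_expPair (p q α β : ℂ) (y : ℝ) :
    HasDerivAt (expPair p q α β) (expPair (p * α) (q * β) α β y) y :=
  (((hasDerivAt_cexp_mul_ofReal α y).const_mul p).add
    ((hasDerivAt_cexp_mul_ofReal β y).const_mul q)).congr_deriv (by simp only [expPair]; ring)

theorem deriv_expPair (p q α β : ℂ) : deriv (expPair p q α β) = expPair (p * α) (q * β) α β :=
  funext fun y => (hasDerivAt_expPair p q α β y).deriv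

theorem contDiff_expPair (p q α β : ℂ) : ContDiff ℝ 2 (expPair p q α β) := by
  have : ContDiff ℝ 2 ((↑) : ℝ → ℂ) := ofRealCLM.contDiff
  unfold expPair
  fun_prop

theorem norm_expPair_le (p q : ℂ) {α β : ℂ} (hα : α.re ≤ 0) (hβ : β.re ≤ 0) {y : ℝ}
    (hy : 0 ≤ y) : ‖expPair p q α β y‖ ≤ ‖p‖ + ‖q‖ := by
  refine (norm_add_le _ _).trans (add_le_add ?_ ?_) <;> rw [norm_mul]
  · exact mul_le_of_le_one_right (norm_nonneg p) (norm_cexp_mul_ofReal_le_one hα hy)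
  · exact mul_le_of_le_one_right (norm_nonneg q) (norm_cexp_mul_ofReal_le_one hβ hy)

theorem eq_of_hasDerivAt_zero_Ici {E : Type*} [NormedAddCommGroup E] [NormedSpace ℝ E]
    {f : ℝ → E} {a : ℝ} (hf : ∀ x, a ≤ x → HasDerivAt f 0 x) {y : ℝ} (hy : a ≤ y) :
    f y = f a := by
  have h := (convex_Ici a).norm_image_sub_le_of_norm_hasDerivWithin_le (C := 0)
    (fun x hx => (hf x hx).hasDerivWithinAt) (fun x _ => by simp) Set.self_mem_Ici hy
  simpa [sub_eq_zero] using h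

theorem eq_mul_cexp_of_hasDerivAt_Ici {f : ℝ → ℂ} {a : ℂ}
    (hf : ∀ x, 0 ≤ x → HasDerivAt f (a * f x) x) {y : ℝ} (hy : 0 ≤ y) :
    f y = f 0 * cexp (a * y) := by
  have hconst : f y * cexp (-a * y) = f 0 := by
    simpa using eq_of_hasDerivAt_zero_Ici (f := fun x : ℝ => f x * cexp (-a * x))
      (fun x hx => ((hf x hx).mul (hasDerivAt_cexp_mul_ofReal (-a) x)).congr_deriv (by ring)) hy
  calc f y = f y * cexp (-a * y) * cexp (a * y) := by
        rw [mul_assoc, cexp_mul_ofReal_mul_cexp_mul_ofReal, neg_add_cancel, zero_mul,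
          Complex.exp_zero, mul_one]
    _ = f 0 * cexp (a * y) := by rw [hconst]

theorem tendsto_mul_cexp_atTop_of_bounded {f : ℝ → ℂ} {B : ℝ} (hB : ∀ x, 0 ≤ x → ‖f x‖ ≤ B) {a : ℂ}
    (ha : a.re < 0) : Tendsto (fun x : ℝ => f x * cexp (a * x)) atTop (𝓝 0) := by
  refine squeeze_zero_norm' ?_ (by simpa using (tendsto_cexp_mul_ofReal_atTop ha).norm.const_mul B)
  filter_upwards [eventually_ge_atTop 0] with x hx
  rw [norm_mul]
  exact mul_le_mul_of_nonneg_right (hB x hx) (norm_nonneg _)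

theorem eq_zero_of_hasDerivAt_of_bounded {a b : ℂ} (hab : a.re < b.re) (hb : 0 < b.re)
    {D D' : ℝ → ℂ} (hD : ∀ x, 0 ≤ x → HasDerivAt D (D' x) x)
    (hD' : ∀ x, 0 ≤ x → HasDerivAt D' ((a + b) * D' x - a * b * D x) x)
    (hD0 : D 0 = 0) (hbdd : ∃ B, ∀ x, 0 ≤ x → ‖D x‖ ≤ B) {y : ℝ} (hy : 0 ≤ y) : D y = 0 := by
  obtain ⟨B, hB⟩ := hbdd
  have hE : ∀ x, 0 ≤ x → D' x - b * D x = (D' 0 - b * D 0) * cexp (a * x) :=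
    fun x hx => eq_mul_cexp_of_hasDerivAt_Ici (f := fun x => D' x - b * D x)
      (fun z hz => ((hD' z hz).sub ((hD z hz).const_mul b)).congr_deriv (by ring)) hx
  have hab' : a - b ≠ 0 := fun h => by simpa [sub_eq_zero, hab.ne] using congrArg re h
  set k := (D' 0 - b * D 0) / (a - b)
  set G : ℝ → ℂ := fun x => D x * cexp (-b * x) - k * cexp ((a - b) * x)
  have hG : ∀ x, 0 ≤ x → G x = -k := by
    intro x hx
    refine (eq_of_hasDerivAt_zero_Ici (fun z hz => ?_) hx).trans (by simp [G, hD0])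
    refine (((hD z hz).mul (hasDerivAt_cexp_mul_ofReal (-b) z)).sub
      ((hasDerivAt_cexp_mul_ofReal (a - b) z).const_mul k)).congr_deriv ?_
    have hsplit : cexp ((a - b) * z) = cexp (a * z) * cexp (-b * z) := by
      rw [cexp_mul_ofReal_mul_cexp_mul_ofReal, sub_eq_add_neg]
    rw [hsplit]
    linear_combination cexp (-b * z) * hE z hz
      - cexp (a * z) * cexp (-b * z) * div_mul_cancel₀ (D' 0 - b * D 0) hab'
  have hG_lim : Tendsto G atTop (𝓝 (0 - k * 0)) :=
    (tendsto_mul_cexp_atTop_of_bounded hB (by simpa using hb)).sub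
      ((tendsto_cexp_mul_ofReal_atTop (by simpa using hab)).const_mul k)
  have hk : k = 0 := by
    have := tendsto_nhds_unique (tendsto_const_nhds.congr' ((eventually_ge_atTop 0).mono
      fun x hx => (hG x hx).symm)) hG_lim
    simpa using this
  simpa [G, hk] using hG y hy

theorem eqOn_Ici_of_contDiff_of_bounded {a b : ℂ} (hab : a.re < b.re) (hb : 0 < b.re)
    {f g : ℝ → ℂ} (hf : ContDiff ℝ 2 f) (hg : ContDiff ℝ 2 g) (h0 : f 0 = g 0)
    (hfb : ∃ B, ∀ x, 0 ≤ x → ‖f x‖ ≤ B) (hgb : ∃ B, ∀ x, 0 ≤ x → ‖g x‖ ≤ B)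
    (hode : ∀ x, 0 ≤ x → deriv (deriv f) x - (a + b) * deriv f x + a * b * f x
      = deriv (deriv g) x - (a + b) * deriv g x + a * b * g x) {y : ℝ} (hy : 0 ≤ y) :
    f y = g y := by
  obtain ⟨Bf, hBf⟩ := hfb
  obtain ⟨Bg, hBg⟩ := hgb
  refine sub_eq_zero.mp (eq_zero_of_hasDerivAt_of_bounded hab hb (D := f - g)
    (D' := deriv f - deriv g) (fun x _ => ?_) (fun x hx => ?_) (by simp [h0])
    ⟨Bf + Bg, fun x hx => (norm_sub_le _ _).trans (add_le_add (hBf x hx) (hBg x hx))⟩ hy)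
  · exact (hf.differentiable two_ne_zero x).hasDerivAt.sub
      (hg.differentiable two_ne_zero x).hasDerivAt
  · refine ((hf.differentiable_deriv_two x).hasDerivAt.sub
      (hg.differentiable_deriv_two x).hasDerivAt).congr_deriv ?_
    simp only [Pi.sub_apply]
    linear_combination hode x hx

theorem one_ne_dispersion {c : ℝ} {lam r : ℂ} (hlam : lam ≠ 0) (hr : r ^ 2 = (c : ℂ) ^ 2 / 4 + lam)
    (hrre : c / 2 < r.re) : (1 : ℂ) ≠ (c / lam) * (-c - (-c / 2 - r)) := by
  intro h
  have hlam_eq : lam = c * (r - c / 2) := by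
    field_simp at h
    linear_combination h / 2
  have hr_eq : r = c / 2 := by
    have hsq : (r - c / 2) ^ 2 = 0 := by linear_combination hr + hlam_eq
    linear_combination pow_eq_zero_iff two_ne_zero |>.mp hsq
  have := congrArg re hr_eq
  simp only [div_ofNat_re, ofReal_re] at this
  linarith

theorem stmt3_general (c : ℝ) (hc : 0 < c) (lam : ℂ) (hlam : lam ≠ 0)
    (r : ℂ) (hr : r ^ 2 = (c : ℂ) ^ 2 / 4 + lam) (hrre : c / 2 < r.re)
    (μ : ℂ) (hμ : μ = -(c : ℂ) / 2 - r)
    (W : ℝ → ℂ)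
    (hW : ∀ y : ℝ, W y = -((c : ℂ) / lam) *
      (Complex.exp (-(c : ℂ) * y) - Complex.exp (μ * y))) :
    W 0 = 0 ∧ (∃ B : ℝ, ∀ y : ℝ, 0 ≤ y → ‖W y‖ ≤ B) ∧
    (∀ y : ℝ, 0 ≤ y → deriv (deriv W) y + (c : ℂ) * deriv W y - lam * W y
      = (c : ℂ) * Complex.exp (-(c : ℂ) * y)) ∧
    (∀ V : ℝ → ℂ, ContDiff ℝ 2 V → V 0 = 0 →
      (∃ B : ℝ, ∀ y : ℝ, 0 ≤ y → ‖V y‖ ≤ B) →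
      (∀ y : ℝ, 0 ≤ y → deriv (deriv V) y + (c : ℂ) * deriv V y - lam * V y
        = (c : ℂ) * Complex.exp (-(c : ℂ) * y)) →
      ∀ y : ℝ, 0 ≤ y → V y = W y) ∧
    (1 : ℂ) ≠ ((c : ℂ) / lam) * (-(c : ℂ) - μ) := by
  subst hμ
  have hW_eq : W = expPair (-(c / lam)) (c / lam) (-c) (-c / 2 - r) :=
    funext fun y => by rw [hW, expPair]; ring
  have hWode : ∀ y : ℝ, deriv (deriv W) y + c * deriv W y - lam * W y = c * cexp (-c * y) := by
    intro y
    simp only [hW_eq, deriv_expPair, expPair]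
    linear_combination (c / lam * cexp ((-c / 2 - r) * y)) * hr
      + cexp (-c * y) * div_mul_cancel₀ (c : ℂ) hlam
  have hμm_re : (-c / 2 - r : ℂ).re < 0 := by
    simp only [sub_re, neg_re, div_ofNat_re, ofReal_re]
    linarith
  have hμp_re : 0 < (-c / 2 + r : ℂ).re := by
    simp only [add_re, neg_re, div_ofNat_re, ofReal_re]
    linarith
  have hWbdd : ∃ B, ∀ y : ℝ, 0 ≤ y → ‖W y‖ ≤ B :=
    ⟨_, fun y hy => hW_eq ▸ norm_expPair_le _ _ (by simp [hc.le]) hμm_re.le hy⟩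
  refine ⟨by simp [hW], hWbdd, fun y _ => hWode y,
    fun V hV hV0 hVbdd hVode y hy => ?_, one_ne_dispersion hlam hr hrre⟩
  refine eqOn_Ici_of_contDiff_of_bounded (hμm_re.trans hμp_re) hμp_re hV
    (hW_eq ▸ contDiff_expPair ..) (by simp [hV0, hW]) hVbdd hWbdd (fun x hx => ?_) hy
  linear_combination hVode x hx - hWode x - (V x - W x) * hr

theorem stmt3 (c : ℝ) (hc : 0 < c) (lam : ℂ) (hre : 0 ≤ lam.re) (hlam : lam ≠ 0)
    (r : ℂ) (hr : r ^ 2 = (c : ℂ) ^ 2 / 4 + lam) (hrre : c / 2 < r.re)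
    (μ : ℂ) (hμ : μ = -(c : ℂ) / 2 - r)
    (W : ℝ → ℂ)
    (hW : ∀ y : ℝ, W y = -((c : ℂ) / lam) *
      (Complex.exp (-(c : ℂ) * y) - Complex.exp (μ * y))) :
    W 0 = 0 ∧ (∃ B : ℝ, ∀ y : ℝ, 0 ≤ y → ‖W y‖ ≤ B) ∧
    (∀ y : ℝ, 0 ≤ y → deriv (deriv W) y + (c : ℂ) * deriv W y - lam * W y
      = (c : ℂ) * Complex.exp (-(c : ℂ) * y)) ∧
    (∀ V : ℝ → ℂ, ContDiff ℝ 2 V → V 0 = 0 →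
      (∃ B : ℝ, ∀ y : ℝ, 0 ≤ y → ‖V y‖ ≤ B) →
      (∀ y : ℝ, 0 ≤ y → deriv (deriv V) y + (c : ℂ) * deriv V y - lam * V y
        = (c : ℂ) * Complex.exp (-(c : ℂ) * y)) →
      ∀ y : ℝ, 0 ≤ y → V y = W y) ∧
    (1 : ℂ) ≠ ((c : ℂ) / lam) * (-(c : ℂ) - μ) :=
  stmt3_general c hc lam hlam r hr hrre μ hμ W hW
end

section
/- Let u : [0,T] → ℝ be measurable with ess sup_{(0,t)} u > 0 for some t ≤ T, and let u_m → u a.e. on (0,t). Assume g_ε : ℝ → [0,∞) satisfies: for each compact K ⊂ (0,∞) there is c_K > 0 with min(g_ε, c_K) → c_K uniformly on K as ε → 0. Then exp(-(1/ε_m)∫₀ᵗ g_{ε_m}(u_m(s)) ds) → 0 as ε_m → 0. -/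
/-!
On a set `B ⊆ (0,t)` of positive measure, `u` stays in a compact interval `K ⊂ (0,∞)` and, by
Egorov's theorem, `u_m → u` uniformly on `B`; hence eventually `u_m(B) ⊆ K` and `g_m ≥ c_K / 2`
on `K`, so `∫₀ᵗ g_m(u_m) ≥ κ := (c_K / 2) |B| > 0`. The exponent is then at most `-κ / ε_m → -∞`.
-/

open Filter MeasureTheory Topology

section MeasureTheory

variable {α : Type*} [MeasurableSpace α] {μ : Measure α}

lemma exists_nat_measure_setOf_mem_Ioc_pos {A : Set α} {u : α → ℝ} {δ : ℝ}
    (h : 0 < μ {s ∈ A | δ < u s}) : ∃ n : ℕ, 0 < μ {s ∈ A | u s ∈ Set.Ioc δ n} := by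
  by_contra! hnull
  refine h.ne' (measure_mono_null ?_ (measure_iUnion_null fun n => nonpos_iff_eq_zero.1 (hnull n)))
  rintro s ⟨hsA, hδs⟩
  obtain ⟨n, hn⟩ := exists_nat_ge (u s)
  exact Set.mem_iUnion.2 ⟨n, hsA, hδs, hn⟩

lemma exists_measure_pos_tendstoUniformlyOn {β ι : Type*} [MetricSpace β]
    [SemilatticeSup ι] [Nonempty ι] [Countable ι] {f : ι → α → β} {g : α → β} {s : Set α}
    (hf : ∀ n, StronglyMeasurable (f n)) (hg : StronglyMeasurable g) (hsm : MeasurableSet s)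
    (hs0 : 0 < μ s) (hs : μ s ≠ ⊤)
    (hfg : ∀ᵐ x ∂μ.restrict s, Tendsto (fun n => f n x) atTop (𝓝 (g x))) :
    ∃ B ⊆ s, MeasurableSet B ∧ 0 < μ B ∧ TendstoUniformlyOn f g atTop B := by
  have hs_real : 0 < μ.real s := ENNReal.toReal_pos hs0.ne' hs
  obtain ⟨t, -, htm, hts, hunif⟩ := tendstoUniformlyOn_of_ae_tendsto hf hg hsm hs
    ((ae_restrict_iff' hsm).1 hfg) (half_pos hs_real)
  have ht_lt : μ t < μ s := hts.trans_lt <|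
    (ENNReal.ofReal_lt_iff_lt_toReal (half_pos hs_real).le hs).2 (half_lt_self hs_real)
  exact ⟨s \ t, Set.sdiff_subset, hsm.diff htm,
    (tsub_pos_of_lt ht_lt).trans_le le_measure_sdiff, hunif⟩

lemma mul_measureReal_le_setIntegral {f : α → ℝ} {A B : Set α} {c : ℝ} (hA : MeasurableSet A)
    (hB : MeasurableSet B) (hBfin : μ B ≠ ⊤) (hBA : B ⊆ A) (hf0 : ∀ x ∈ A, 0 ≤ f x)
    (hf : IntegrableOn f A μ) (hc : ∀ x ∈ B, c ≤ f x) : c * μ.real B ≤ ∫ x in A, f x ∂μ :=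
  calc c * μ.real B ≤ ∫ x in B, f x ∂μ :=
        setIntegral_ge_of_const_le_real hB hBfin hc (hf.mono_set hBA)
    _ ≤ ∫ x in A, f x ∂μ :=
        setIntegral_mono_set hf (ae_restrict_of_forall_mem hA hf0)
          (Eventually.of_forall hBA)

end MeasureTheory

section Eventually

variable {ι α : Type*} {l : Filter ι}

lemma eventually_forall_mem_Icc_of_tendstoUniformlyOn {f : ι → α → ℝ} {u : α → ℝ} {B : Set α}
    {a b r : ℝ} (hf : TendstoUniformlyOn f u l B) (hr : 0 < r) (hu : ∀ s ∈ B, u s ∈ Set.Icc a b) :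
    ∀ᶠ m in l, ∀ s ∈ B, f m s ∈ Set.Icc (a - r) (b + r) := by
  filter_upwards [Metric.tendstoUniformlyOn_iff.1 hf r hr] with m hm s hs
  have hd := abs_lt.1 (Real.dist_eq _ _ ▸ hm s hs)
  exact ⟨by linarith [(hu s hs).1], by linarith [(hu s hs).2]⟩

lemma eventually_half_le_of_tendstoUniformlyOn_min {g : ι → α → ℝ} {K : Set α} {c : ℝ}
    (hc : 0 < c) (h : TendstoUniformlyOn (fun m z => min (g m z) c) (fun _ => c) l K) :
    ∀ᶠ m in l, ∀ z ∈ K, c / 2 ≤ g m z := by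
  filter_upwards [Metric.tendstoUniformlyOn_iff.1 h (c / 2) (half_pos hc)] with m hm z hz
  have hd := abs_lt.1 (Real.dist_eq _ _ ▸ hm z hz)
  linarith [min_le_left (g m z) c]

lemma tendsto_exp_neg_inv_mul_of_le {ε I : ι → ℝ} {κ : ℝ} (hε : Tendsto ε l (𝓝[>] 0))
    (hκ : 0 < κ) (hI : ∀ᶠ m in l, κ ≤ I m) :
    Tendsto (fun m => Real.exp (-(1 / ε m) * I m)) l (𝓝 0) := by
  have hinv : Tendsto (fun m => 1 / ε m) l atTop := by
    simp only [one_div]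
    exact tendsto_inv_nhdsGT_zero.comp hε
  refine Real.tendsto_exp_atBot.comp <|
    tendsto_atBot_mono' l ?_ (tendsto_neg_atBot_iff.2 (hinv.atTop_mul_const hκ))
  filter_upwards [hI, hε self_mem_nhdsWithin] with m hm hεm
  rw [neg_mul]
  exact neg_le_neg (mul_le_mul_of_nonneg_left hm (one_div_pos.2 hεm).le)

end Eventually

theorem stmt10 (t : ℝ) (ht : 0 < t) (u : ℝ → ℝ) (humeas : Measurable u)
    -- ess sup of u over (0,t) is positive
    (hpos : ∃ δ > (0 : ℝ), 0 < MeasureTheory.volume {s ∈ Set.Ioo 0 t | δ < u s})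
    (ε : ℕ → ℝ) (hεpos : ∀ m, 0 < ε m) (hε0 : Tendsto ε atTop (nhds 0))
    (g : ℕ → ℝ → ℝ) (hgpos : ∀ m z, 0 ≤ g m z)
    (hg : ∀ K : Set ℝ, IsCompact K → K ⊆ Set.Ioi 0 → ∃ c > (0 : ℝ),
      TendstoUniformlyOn (fun m z => min (g m z) c) (fun _ => c) atTop K)
    (um : ℕ → ℝ → ℝ) (hummeas : ∀ m, Measurable (um m))
    (hae : ∀ᵐ s ∂(MeasureTheory.volume.restrict (Set.Ioo 0 t)),
      Tendsto (fun m => um m s) atTop (nhds (u s)))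
    (hint : ∀ m, IntervalIntegrable (fun s => g m (um m s)) MeasureTheory.volume 0 t) :
    Tendsto (fun m => Real.exp (-(1 / ε m) * ∫ s in (0 : ℝ)..t, g m (um m s)))
      atTop (nhds 0) := by
  obtain ⟨δ, hδ, hA⟩ := hpos
  obtain ⟨n, hS⟩ := exists_nat_measure_setOf_mem_Ioc_pos hA
  set S := {s ∈ Set.Ioo 0 t | u s ∈ Set.Ioc δ n}
  have hSsub : S ⊆ Set.Ioc 0 t := fun s hs => Set.Ioo_subset_Ioc_self hs.1
  have hSfin : volume S ≠ ⊤ := ((measure_mono hSsub).trans_lt measure_Ioc_lt_top).ne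
  obtain ⟨B, hBS, hBm, hB, hunif⟩ := exists_measure_pos_tendstoUniformlyOn
    (fun m => (hummeas m).stronglyMeasurable) humeas.stronglyMeasurable
    (measurableSet_Ioo.inter (humeas measurableSet_Ioc)) hS hSfin
    (ae_restrict_of_ae_restrict_of_subset (fun s hs => hs.1) hae)
  obtain ⟨c, hc, hgc⟩ := hg (Set.Icc (δ - δ / 2) (n + δ / 2)) isCompact_Icc
    fun z hz => lt_of_lt_of_le (by linarith) hz.1
  have hBfin : volume B ≠ ⊤ := ne_top_of_le_ne_top hSfin (measure_mono hBS)
  refine tendsto_exp_neg_inv_mul_of_le (κ := c / 2 * volume.real B)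
    (tendsto_nhdsWithin_of_tendsto_nhds_of_eventually_within _ hε0 (.of_forall hεpos))
    (mul_pos (half_pos hc) (ENNReal.toReal_pos hB.ne' hBfin)) ?_
  filter_upwards [eventually_forall_mem_Icc_of_tendstoUniformlyOn hunif (half_pos hδ)
      fun s hs => Set.Ioc_subset_Icc_self (hBS hs).2,
    eventually_half_le_of_tendstoUniformlyOn_min hc hgc] with m hmK hgK
  rw [intervalIntegral.integral_of_le ht.le]
  exact mul_measureReal_le_setIntegral measurableSet_Ioc hBm hBfin (hBS.trans hSsub)
    (fun s _ => hgpos m _) (hint m).1 fun s hs => hgK _ (hmK s hs)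
end
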